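/- Let ρ be any 2×2 complex matrix and w_ρ(m,α,β) = Tr(ρ · U(m,α,β)) its qubit tomogram. Define the kernel K_z(m,α,β; m',α',β') = (1/2)·δ_{m m'}·(1 − 3 cos α sin β cos α' sin β' − 3 sin α sin β sin α' sin β' + 3 cos β cos β'). Then for all m ∈ {−1/2,1/2} and real α, β: Σ_{m' ∈ {−1/2,1/2}} (1/(2π)) ∫₀^{2π} ∫₀^{π} K_z(m,α,β; m',α',β') · w_ρ(m',α',β') · sin β' dβ' dα' = Tr(σ_z ρ σ_z · U(m,α,β)). -/

import Mathlib

open Matrix Real MeasureTheory intervalIntegral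

noncomputable def sigmaX : Matrix (Fin 2) (Fin 2) ℂ := !![0, 1; 1, 0]
noncomputable def sigmaY : Matrix (Fin 2) (Fin 2) ℂ := !![0, -Complex.I; Complex.I, 0]
noncomputable def sigmaZ : Matrix (Fin 2) (Fin 2) ℂ := !![1, 0; 0, -1]

/-- The qubit de-quantizer U(m, α, β). -/
noncomputable def dequantizer (m α β : ℝ) : Matrix (Fin 2) (Fin 2) ℂ :=
  (1/2 : ℂ) • (1 : Matrix (Fin 2) (Fin 2) ℂ)
    - ((m * Real.cos α * Real.sin β : ℝ) : ℂ) • sigmaX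
    - ((m * Real.sin α * Real.sin β : ℝ) : ℂ) • sigmaY
    + ((m * Real.cos β : ℝ) : ℂ) • sigmaZ

/-- The qubit tomogram of a 2×2 complex matrix ρ. -/
noncomputable def tomogram (ρ : Matrix (Fin 2) (Fin 2) ℂ) (m α β : ℝ) : ℂ :=
  (ρ * dequantizer m α β).trace

/-- The tomographic kernel of the channel ρ ↦ sigmaZ ρ sigmaZ. -/
noncomputable def kernelZ (m α β m' α' β' : ℝ) : ℝ :=
  (1/2) * (if m = m' then (1:ℝ) else 0) *
    (1 - 3 * Real.cos α * Real.sin β * Real.cos α' * Real.sin β'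
      - 3 * Real.sin α * Real.sin β * Real.sin α' * Real.sin β'
      + 3 * Real.cos β * Real.cos β')

/-!
Write `u'` for the unit vector with polar angle `β'` and azimuth `α'`. The tomogram is affine in
`u'`, namely `tr ρ / 2 - m ⟪u', b⟫` for a Bloch-type vector `b` of `ρ`, and on the diagonal
`m' = m` the kernel is affine too, `(1 - 3 ⟪R n, u'⟫) / 2` with `n` the unit vector of `(α, β)` and
`R` the reflection in the `xy`-plane. The sphere moments `∫ 1 = 4π`, `∫ uᵢ = 0`,
`∫ uᵢ uⱼ = 4π/3 · δᵢⱼ` turn the left side into `tr ρ / 2 + m ⟪R n, b⟫`, which is also the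
expansion of the right side.
-/

noncomputable def unitVec (α β : ℝ) : Fin 3 → ℝ :=
  ![Real.cos α * Real.sin β, Real.sin α * Real.sin β, Real.cos β]

@[fun_prop]
lemma Continuous.unitVec {X : Type*} [TopologicalSpace X] {f g : X → ℝ} (hf : Continuous f)
    (hg : Continuous g) (i : Fin 3) : Continuous fun x => unitVec (f x) (g x) i := by
  fin_cases i <;> simp only [_root_.unitVec] <;> fun_prop

lemma unitVec_apply_eq_mul (α β : ℝ) (i : Fin 3) :
    unitVec α β i = ![Real.cos α, Real.sin α, 1] i * ![Real.sin β, Real.sin β, Real.cos β] i := by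
  fin_cases i <;> simp [unitVec]

noncomputable def sphereIntegral (f : ℝ → ℝ → ℂ) : ℂ :=
  ∫ α in (0:ℝ)..2 * π, ∫ β in (0:ℝ)..π, f α β * (Real.sin β : ℂ)

lemma sphereIntegral_finsetSum {ι : Type*} (s : Finset ι) (f : ι → ℝ → ℝ → ℂ)
    (hf : ∀ i ∈ s, Continuous (Function.uncurry (f i))) :
    sphereIntegral (fun α β => ∑ i ∈ s, f i α β) = ∑ i ∈ s, sphereIntegral (f i) := by
  have hsection : ∀ i ∈ s, ∀ α, Continuous (fun β => f i α β * (Real.sin β : ℂ)) := by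
    intro i hi α
    have := (hf i hi).uncurry_left α
    fun_prop
  have hinner : ∀ i ∈ s, Continuous (fun α => ∫ β in (0:ℝ)..π, f i α β * (Real.sin β : ℂ)) := by
    intro i hi
    apply intervalIntegral.continuous_parametric_intervalIntegral_of_continuous'
    have := hf i hi
    fun_prop
  simp only [sphereIntegral, Finset.sum_mul]
  rw [← intervalIntegral.integral_finsetSum fun i hi => (hinner i hi).intervalIntegrable _ _]
  congr 1 with α
  exact intervalIntegral.integral_finsetSum fun i hi => (hsection i hi α).intervalIntegrable _ _

lemma sphereIntegral_add {f g : ℝ → ℝ → ℂ} (hf : Continuous (Function.uncurry f))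
    (hg : Continuous (Function.uncurry g)) :
    sphereIntegral (fun α β => f α β + g α β) = sphereIntegral f + sphereIntegral g := by
  simpa using sphereIntegral_finsetSum Finset.univ ![f, g] (by simp [Fin.forall_fin_two, hf, hg])

lemma sphereIntegral_const_mul (c : ℂ) (f : ℝ → ℝ → ℂ) :
    sphereIntegral (fun α β => c * f α β) = c * sphereIntegral f := by
  simp only [sphereIntegral, mul_assoc, intervalIntegral.integral_const_mul]

lemma sphereIntegral_ofReal_mul (g h : ℝ → ℝ) :
    sphereIntegral (fun α β => ((g α * h β : ℝ) : ℂ))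
      = (((∫ α in (0:ℝ)..2 * π, g α) * ∫ β in (0:ℝ)..π, h β * Real.sin β : ℝ) : ℂ) := by
  simp only [sphereIntegral, ← Complex.ofReal_mul, intervalIntegral.integral_ofReal, mul_assoc,
    intervalIntegral.integral_const_mul, intervalIntegral.integral_mul_const]

lemma sphereIntegral_one : sphereIntegral (fun _ _ => 1) = 4 * π := by
  have := sphereIntegral_ofReal_mul (fun _ => 1) (fun _ => 1)
  norm_num at this
  rw [this]
  ring

lemma sphereIntegral_unitVec (i : Fin 3) :
    sphereIntegral (fun α β => (unitVec α β i : ℂ)) = 0 := by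
  have hcs : ∫ x in (0:ℝ)..π, Real.cos x * Real.sin x = 0 := by
    simp [mul_comm (Real.cos _), integral_sin_mul_cos₁]
  simp only [unitVec_apply_eq_mul, sphereIntegral_ofReal_mul]
  fin_cases i <;> simp [Real.sin_two_pi, Real.cos_two_pi, hcs]

lemma sphereIntegral_unitVec_mul_unitVec (i j : Fin 3) :
    sphereIntegral (fun α β => ((unitVec α β i * unitVec α β j : ℝ) : ℂ))
      = if i = j then 4 * (π : ℂ) / 3 else 0 := by
  have hcc : ∫ x in (0:ℝ)..2 * π, Real.cos x * Real.cos x = π := by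
    simp [← sq, Real.sin_two_pi]
  have hss : ∫ x in (0:ℝ)..2 * π, Real.sin x * Real.sin x = π := by
    simp [← sq, Real.sin_two_pi]
  have hcs : ∫ x in (0:ℝ)..2 * π, Real.cos x * Real.sin x = 0 := by
    simp [mul_comm (Real.cos _), integral_sin_mul_cos₁, Real.sin_two_pi]
  have hsss : ∫ x in (0:ℝ)..π, Real.sin x * Real.sin x * Real.sin x = 4 / 3 := by
    simp only [mul_assoc, ← pow_three, integral_sin_pow_three]; norm_num
  have hccs : ∫ x in (0:ℝ)..π, Real.cos x * Real.cos x * Real.sin x = 2 / 3 := by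
    simp only [mul_comm _ (Real.sin _), ← sq, integral_sin_mul_cos_sq]; norm_num
  simp only [unitVec_apply_eq_mul, mul_mul_mul_comm _ (![Real.sin _, _, _] i),
    sphereIntegral_ofReal_mul]
  fin_cases i <;> fin_cases j <;> simp [hcc, hss, hcs, hsss, hccs] <;> ring

lemma sphereIntegral_affine_mul_affine (c d : ℂ) (a b : Fin 3 → ℂ) :
    sphereIntegral (fun α β => (c + ∑ i, a i * unitVec α β i) * (d + ∑ j, b j * unitVec α β j))
      = 4 * π * (c * d + (∑ i, a i * b i) / 3) := by
  have hexpand : ∀ α β, (c + ∑ i, a i * unitVec α β i) * (d + ∑ j, b j * unitVec α β j)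
      = c * d * 1 + (∑ i, (c * b i + d * a i) * unitVec α β i
        + ∑ p : Fin 3 × Fin 3, a p.1 * b p.2 * ((unitVec α β p.1 * unitVec α β p.2 : ℝ) : ℂ)) := by
    intro α β
    simp only [Fintype.sum_prod_type, Fin.sum_univ_three]
    push_cast
    ring
  simp only [hexpand]
  rw [sphereIntegral_add (by fun_prop) (by fun_prop),
    sphereIntegral_add (by fun_prop) (by fun_prop),
    sphereIntegral_const_mul, sphereIntegral_one,
    sphereIntegral_finsetSum _ _ fun _ _ => by fun_prop,
    sphereIntegral_finsetSum _ _ fun _ _ => by fun_prop]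
  simp only [sphereIntegral_const_mul, sphereIntegral_unitVec, sphereIntegral_unitVec_mul_unitVec,
    mul_zero, Finset.sum_const_zero, zero_add, Fintype.sum_prod_type, mul_ite, Finset.sum_ite_eq,
    Finset.mem_univ, if_true, ← Finset.sum_mul]
  ring

def reflectZ {R : Type*} [Neg R] (v : Fin 3 → R) : Fin 3 → R := ![v 0, v 1, -v 2]

/-- The sign of the last entry absorbs the sign of the `σ_z` term of `dequantizer`. -/
noncomputable def blochVec (ρ : Matrix (Fin 2) (Fin 2) ℂ) : Fin 3 → ℂ :=
  ![(ρ * sigmaX).trace, (ρ * sigmaY).trace, -(ρ * sigmaZ).trace]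

lemma tomogram_eq_half_trace_sub (ρ : Matrix (Fin 2) (Fin 2) ℂ) (m α β : ℝ) :
    tomogram ρ m α β = ρ.trace / 2 - m * ∑ i, unitVec α β i * blochVec ρ i := by
  rw [tomogram, Matrix.eta_fin_two ρ]
  simp [dequantizer, sigmaX, sigmaY, sigmaZ, blochVec, unitVec, Matrix.one_fin_two, Matrix.smul_of,
    Matrix.trace_fin_two, Fin.sum_univ_three]
  ring

lemma trace_sigmaZ_conj_mul_dequantizer (ρ : Matrix (Fin 2) (Fin 2) ℂ) (m α β : ℝ) :
    (sigmaZ * ρ * sigmaZ * dequantizer m α β).trace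
      = ρ.trace / 2 + m * ∑ i, reflectZ (unitVec α β) i * blochVec ρ i := by
  rw [Matrix.eta_fin_two ρ]
  simp [dequantizer, sigmaX, sigmaY, sigmaZ, blochVec, unitVec, reflectZ, Matrix.one_fin_two,
    Matrix.smul_of, Matrix.trace_fin_two, Fin.sum_univ_three]
  ring

lemma kernelZ_of_ne {m m' : ℝ} (h : m ≠ m') (α β α' β' : ℝ) : kernelZ m α β m' α' β' = 0 := by
  simp [kernelZ, h]

lemma kernelZ_self (m α β α' β' : ℝ) :
    kernelZ m α β m α' β' = 1 / 2 * (1 - 3 * ∑ i, reflectZ (unitVec α β) i * unitVec α' β' i) := by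
  simp [kernelZ, reflectZ, unitVec, Fin.sum_univ_three]
  ring

lemma kernelZ_self_mul_tomogram (ρ : Matrix (Fin 2) (Fin 2) ℂ) (m α β α' β' : ℝ) :
    (kernelZ m α β m α' β' : ℂ) * tomogram ρ m α' β'
      = (1 / 2 + ∑ i, (-(3 / 2) * reflectZ (unitVec α β) i : ℂ) * unitVec α' β' i)
        * (ρ.trace / 2 + ∑ i, -(m * blochVec ρ i) * unitVec α' β' i) := by
  simp only [kernelZ_self, tomogram_eq_half_trace_sub, Fin.sum_univ_three]
  push_cast
  ring

theorem kernelZ_represents (ρ : Matrix (Fin 2) (Fin 2) ℂ) :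
    ∀ m : ℝ, m = -(1/2) ∨ m = 1/2 → ∀ α β : ℝ,
      (1 / (2 * (Real.pi : ℂ))) *
        ∫ α' in (0:ℝ)..(2 * Real.pi), ∫ β' in (0:ℝ)..Real.pi,
          ((kernelZ m α β (1/2) α' β' : ℂ) * tomogram ρ (1/2) α' β'
            + (kernelZ m α β (-(1/2)) α' β' : ℂ) * tomogram ρ (-(1/2)) α' β')
          * (Real.sin β' : ℂ)
      = (sigmaZ * ρ * sigmaZ * dequantizer m α β).trace := by
  intro m hm α β
  have hdiag : ∀ α' β', (kernelZ m α β (1/2) α' β' : ℂ) * tomogram ρ (1/2) α' β'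
      + (kernelZ m α β (-(1/2)) α' β' : ℂ) * tomogram ρ (-(1/2)) α' β'
      = (kernelZ m α β m α' β' : ℂ) * tomogram ρ m α' β' := by
    intro α' β'
    rcases hm with rfl | rfl <;> norm_num [kernelZ_of_ne]
  have hπ : (π : ℂ) ≠ 0 := Complex.ofReal_ne_zero.mpr Real.pi_ne_zero
  simp only [hdiag, kernelZ_self_mul_tomogram]
  rw [← sphereIntegral, sphereIntegral_affine_mul_affine, trace_sigmaZ_conj_mul_dequantizer]
  simp only [Fin.sum_univ_three]
  field_simp
  ring
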